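/- arXiv:1602.04360 — 3 statements merged into one kernel-verified Lean document; each statement's English description precedes it below -/
import Mathlib

section
/- Let m ≥ 2 and let a_2 ≤ a_3 ≤ … ≤ a_m be integers with 0 ≤ a_2 and a_m > 0. Then the inequality 4 + a_2 + … + a_m > m·a_m holds if and only if one of the following holds: (1) a_2 = … = a_m and this common value lies in {1,2,3}; (2) m ≥ 3, a_2 + 1 = a_3 = … = a_m and this common value a_3 lies in {1,2}; (3) m ≥ 4, a_2 = a_3 = 0 and a_4 = … = a_m = 1. -/
/-!
Write `S = a₂ + ⋯ + aₘ` and let `D = ∑ₖ (aₘ - aₖ) ≥ 0` be the defect of the sequence from being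
constant. Since `S = (m - 1) aₘ - D`, the inequality says exactly `aₘ + D < 4`, and as `aₘ ≥ 1`
this leaves `D ∈ {0, 1, 2}`. The terms `aₘ - aₖ` are nonincreasing, so `(i + 1)(aₘ - a_{2+i}) ≤ D`;
hence `D = 1` forces `a₃ = aₘ` (then `a₂ = a₃ - 1`), and `D = 2` forces `a₄ = aₘ = 1`, which with
`0 ≤ a₂ ≤ a₃ ≤ 1` gives `a₂ = a₃ = 0`.
-/

open Finset

def defect (a : ℕ → ℤ) (n m : ℕ) : ℤ := ∑ k ∈ Icc n m, (a m - a k)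

section Defect

variable {a : ℕ → ℤ} {n m : ℕ}

theorem sum_add_defect (a : ℕ → ℤ) (n m : ℕ) :
    ∑ k ∈ Icc n m, a k + defect a n m = ((m + 1 - n : ℕ) : ℤ) * a m := by
  rw [defect, ← sum_add_distrib, sum_congr rfl fun k _ => add_sub_cancel (a k) (a m), sum_const,
    Nat.card_Icc, nsmul_eq_mul]

theorem defect_eq_sub_add (hnm : n ≤ m) : defect a n m = a m - a n + defect a (n + 1) m := by
  rw [defect, defect, ← insert_Icc_add_one_left_eq_Icc hnm, sum_insert (by simp)]

theorem defect_eq_zero_of_le (hmn : m ≤ n) : defect a n m = 0 :=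
  sum_eq_zero fun k hk => by
    obtain rfl : k = m := by simp only [mem_Icc] at hk; omega
    exact sub_self _

theorem sub_nonneg_of_monotoneOn (h : MonotoneOn a (Set.Icc n m)) {k : ℕ} (hk : k ∈ Icc n m) :
    0 ≤ a m - a k := by
  have hk' : k ∈ Set.Icc n m := by simpa using hk
  exact sub_nonneg.2 (h hk' ⟨hk'.1.trans hk'.2, le_rfl⟩ hk'.2)

theorem apply_eq_of_monotoneOn (h : MonotoneOn a (Set.Icc n m)) {j : ℕ} (hj : n ≤ j)
    (hja : a j = a m) : ∀ k ∈ Icc j m, a k = a m := fun k hk => by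
  have hk' : k ∈ Set.Icc j m := by simpa using hk
  exact le_antisymm (h ⟨hj.trans hk'.1, hk'.2⟩ ⟨hj.trans (hk'.1.trans hk'.2), le_rfl⟩ hk'.2)
    (hja ▸ h ⟨hj, hk'.1.trans hk'.2⟩ ⟨hj.trans hk'.1, hk'.2⟩ hk'.1)

theorem defect_nonneg (h : MonotoneOn a (Set.Icc n m)) : 0 ≤ defect a n m :=
  sum_nonneg fun _ hk => sub_nonneg_of_monotoneOn h hk

theorem succ_nsmul_le_defect (h : MonotoneOn a (Set.Icc n m)) {i : ℕ} (hi : n + i ≤ m) :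
    (i + 1) • (a m - a (n + i)) ≤ defect a n m := by
  have hcard : #(Icc n (n + i)) = i + 1 := by rw [Nat.card_Icc]; omega
  have hni : n + i ∈ Set.Icc n m := ⟨by omega, hi⟩
  calc (i + 1) • (a m - a (n + i)) ≤ ∑ k ∈ Icc n (n + i), (a m - a k) :=
        hcard ▸ card_nsmul_le_sum _ _ _ fun k hk => by
          have hk' : k ∈ Set.Icc n (n + i) := by simpa using hk
          exact sub_le_sub_left (h ⟨hk'.1, hk'.2.trans hi⟩ hni hk'.2) _
    _ ≤ defect a n m :=
        sum_le_sum_of_subset_of_nonneg (Icc_subset_Icc_right hi)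
          fun _ hk _ => sub_nonneg_of_monotoneOn h hk

theorem defect_eq_zero_iff (h : MonotoneOn a (Set.Icc n m)) :
    defect a n m = 0 ↔ ∀ k ∈ Icc n m, a k = a m := by
  rw [defect, sum_eq_zero_iff_of_nonneg fun _ hk => sub_nonneg_of_monotoneOn h hk]
  exact forall₂_congr fun _ _ => sub_eq_zero.trans eq_comm

theorem defect_eq_one_iff (h : MonotoneOn a (Set.Icc n m)) :
    defect a n m = 1 ↔
      n + 1 ≤ m ∧ a n + 1 = a (n + 1) ∧ ∀ k ∈ Icc (n + 1) m, a k = a (n + 1) := by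
  have h₁ : MonotoneOn a (Set.Icc (n + 1) m) := h.mono (Set.Icc_subset_Icc_left n.le_succ)
  constructor
  · intro hD
    have hnm : n + 1 ≤ m := by
      by_contra! hmn
      rw [defect_eq_zero_of_le (by omega)] at hD
      exact zero_ne_one hD
    have hsucc : a (n + 1) = a m := by
      have hbound := succ_nsmul_le_defect h (i := 1) hnm
      have := sub_nonneg_of_monotoneOn h (k := n + 1) (by simp; omega)
      rw [succ_nsmul, one_nsmul] at hbound
      omega
    have hflat := apply_eq_of_monotoneOn h n.le_succ hsucc
    rw [defect_eq_sub_add (by omega), (defect_eq_zero_iff h₁).2 hflat] at hD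
    exact ⟨hnm, by omega, fun k hk => (hflat k hk).trans hsucc.symm⟩
  · rintro ⟨hnm, hstep, hflat⟩
    have hm : a m = a (n + 1) := hflat m (by simp [hnm])
    rw [defect_eq_sub_add (by omega),
      (defect_eq_zero_iff h₁).2 fun k hk => (hflat k hk).trans hm.symm]
    omega

theorem defect_eq_two_iff (h : MonotoneOn a (Set.Icc n m)) (ha : 0 ≤ a n) :
    a m = 1 ∧ defect a n m = 2 ↔
      n + 2 ≤ m ∧ a n = 0 ∧ a (n + 1) = 0 ∧ ∀ k ∈ Icc (n + 2) m, a k = 1 := by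
  have h₂ : MonotoneOn a (Set.Icc (n + 2) m) := h.mono (Set.Icc_subset_Icc_left (by omega))
  constructor
  · rintro ⟨hm, hD⟩
    have hnm : n + 2 ≤ m := by
      by_contra! hmn
      obtain hmn | rfl : m ≤ n ∨ m = n + 1 := by omega
      · rw [defect_eq_zero_of_le hmn] at hD
        exact two_ne_zero hD.symm
      · rw [defect_eq_sub_add (by omega), defect_eq_zero_of_le le_rfl] at hD
        omega
    have hsucc₂ : a (n + 2) = a m := by
      have hbound := succ_nsmul_le_defect h (i := 2) hnm
      have := sub_nonneg_of_monotoneOn h (k := n + 2) (by simp; omega)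
      rw [succ_nsmul, two_nsmul] at hbound
      omega
    have hflat := apply_eq_of_monotoneOn h (by omega) hsucc₂
    have hle : a n ≤ a (n + 1) := h ⟨le_rfl, by omega⟩ ⟨by omega, by omega⟩ n.le_succ
    have hle₁ : a (n + 1) ≤ a m := h ⟨by omega, by omega⟩ ⟨by omega, le_rfl⟩ (by omega)
    rw [defect_eq_sub_add (by omega), defect_eq_sub_add (by omega),
      (defect_eq_zero_iff h₂).2 hflat] at hD
    exact ⟨hnm, by omega, by omega, fun k hk => (hflat k hk).trans hm⟩
  · rintro ⟨hnm, hn, hn₁, hflat⟩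
    have hm : a m = 1 := hflat m (by simp [hnm])
    refine ⟨hm, ?_⟩
    rw [defect_eq_sub_add (by omega), defect_eq_sub_add (by omega),
      (defect_eq_zero_iff h₂).2 fun k hk => (hflat k hk).trans hm.symm]
    omega

theorem add_sum_Icc_two_gt_iff (hm : 1 ≤ m) (c : ℤ) :
    c + ∑ k ∈ Icc 2 m, a k > m * a m ↔ a m + defect a 2 m < c := by
  have hsum := sum_add_defect a 2 m
  rw [show ((m + 1 - 2 : ℕ) : ℤ) = m - 1 by omega] at hsum
  constructor <;> intro <;> linarith

end Defect

theorem stmt_0 (m : ℕ) (hm : 2 ≤ m) (a : ℕ → ℤ)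
    (hmono : ∀ i j, 2 ≤ i → i ≤ j → j ≤ m → a i ≤ a j)
    (h0 : 0 ≤ a 2) (hpos : 0 < a m) :
    (4 + ∑ k ∈ Finset.Icc 2 m, a k > (m : ℤ) * a m) ↔
      ((∀ k ∈ Finset.Icc 2 m, a k = a m) ∧ a m ∈ ({1, 2, 3} : Set ℤ)) ∨
      (3 ≤ m ∧ a 2 + 1 = a 3 ∧ (∀ k ∈ Finset.Icc 3 m, a k = a 3) ∧
        a 3 ∈ ({1, 2} : Set ℤ)) ∨
      (4 ≤ m ∧ a 2 = 0 ∧ a 3 = 0 ∧ ∀ k ∈ Finset.Icc 4 m, a k = 1) := by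
  have h : MonotoneOn a (Set.Icc 2 m) := fun i hi j hj hij => hmono i j hi.1 hij hj.2
  have hD := defect_nonneg h
  have hcases : a m + defect a 2 m < 4 ↔
      (defect a 2 m = 0 ∧ a m ∈ ({1, 2, 3} : Set ℤ)) ∨
        (defect a 2 m = 1 ∧ a m ∈ ({1, 2} : Set ℤ)) ∨ (a m = 1 ∧ defect a 2 m = 2) := by
    simp only [Set.mem_insert_iff, Set.mem_singleton_iff]
    omega
  rw [add_sum_Icc_two_gt_iff (by omega), hcases, defect_eq_zero_iff h, defect_eq_one_iff h,
    defect_eq_two_iff h h0]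
  refine or_congr_right (or_congr_left ⟨?_, ?_⟩)
  · rintro ⟨⟨h3, hstep, hflat⟩, hmem⟩
    exact ⟨h3, hstep, hflat, hflat m (by simp [h3]) ▸ hmem⟩
  · rintro ⟨h3, hstep, hflat, hmem⟩
    exact ⟨⟨h3, hstep, hflat⟩, (hflat m (by simp [h3])).symm ▸ hmem⟩
end

section
/- Let m ≥ 2 and let a_2 ≤ a_3 ≤ … ≤ a_m be integers with 0 ≤ a_2 and a_m > 0. Then the inequality 3 + a_2 + … + a_m > m·a_m holds if and only if one of the following holds: (1) a_2 = … = a_m and this common value lies in {1,2}; (2) m ≥ 3, a_2 = 0 and a_3 = … = a_m = 1. -/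
/-! With `M = a m` and the deficit `D = ∑ k ∈ Icc 2 m, (M - a k) ≥ 0`, the inequality reads
`M + D < 3`. Hence `D ≤ 1`, which by monotonicity forces `a 3 = ⋯ = a m = M`, and the inequality
collapses to `2 M < 3 + a 2`; together with `a 2 ≤ M` and `M > 0` this leaves exactly
`a 2 = M ∈ {1, 2}` or `a 2 = 0, M = 1`. -/

open Finset

section

variable {a : ℕ → ℤ} {l m : ℕ}

theorem sum_Icc_sub_eq (hlm : l ≤ m + 1) :
    ∑ k ∈ Icc l m, (a m - a k) = ((m : ℤ) + 1 - l) * a m - ∑ k ∈ Icc l m, a k := by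
  rw [sum_sub_distrib, sum_const, nsmul_eq_mul, Nat.card_Icc, Nat.cast_sub hlm]
  push_cast
  ring

theorem sum_Icc_eq_of_forall_Icc_succ_eq (hlm : l ≤ m)
    (htail : ∀ k ∈ Icc (l + 1) m, a k = a m) :
    ∑ k ∈ Icc l m, a k = a l + ((m : ℤ) - l) * a m := by
  rw [← insert_Icc_add_one_left_eq_Icc hlm, sum_insert (by simp), sum_congr rfl htail,
    sum_const, nsmul_eq_mul, Nat.card_Icc, Nat.add_sub_add_right, Nat.cast_sub hlm]

/-- If `a k < a m` for some `k > l`, then also `a l < a m`, so the terms at `l` and `k` alone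
already contribute `2`. -/
theorem forall_Icc_succ_eq_of_sum_sub_le_one
    (hmono : ∀ i j, l ≤ i → i ≤ j → j ≤ m → a i ≤ a j)
    (hsum : ∑ k ∈ Icc l m, (a m - a k) ≤ 1) : ∀ k ∈ Icc (l + 1) m, a k = a m := by
  intro k hk
  rw [mem_Icc] at hk
  by_contra hne
  have hk_lt : a k < a m := (hmono k m (by omega) hk.2 le_rfl).lt_of_ne hne
  have hl_lt : a l < a m := (hmono l k le_rfl (by omega) hk.2).trans_lt hk_lt
  have hpair : ∑ i ∈ {l, k}, (a m - a i) ≤ ∑ i ∈ Icc l m, (a m - a i) :=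
    sum_le_sum_of_subset_of_nonneg
      (by intro i hi; simp only [mem_insert, mem_singleton] at hi; simp only [mem_Icc]; omega)
      (fun i hi _ => sub_nonneg.2 (hmono i m (mem_Icc.1 hi).1 (mem_Icc.1 hi).2 le_rfl))
  rw [sum_pair (by omega)] at hpair
  linarith

theorem mul_lt_three_add_sum_iff (hm : 2 ≤ m)
    (hmono : ∀ i j, 2 ≤ i → i ≤ j → j ≤ m → a i ≤ a j) (hpos : 0 < a m) :
    (m : ℤ) * a m < 3 + ∑ k ∈ Icc 2 m, a k ↔
      (∀ k ∈ Icc 3 m, a k = a m) ∧ 2 * a m < 3 + a 2 := by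
  constructor
  · intro h
    have htail : ∀ k ∈ Icc 3 m, a k = a m := by
      refine forall_Icc_succ_eq_of_sum_sub_le_one hmono ?_
      rw [sum_Icc_sub_eq (by omega)]
      push_cast
      linarith
    refine ⟨htail, ?_⟩
    rw [sum_Icc_eq_of_forall_Icc_succ_eq hm htail] at h
    push_cast at h
    linarith
  · rintro ⟨htail, hlt⟩
    rw [sum_Icc_eq_of_forall_Icc_succ_eq hm htail]
    push_cast
    linarith

theorem forall_Icc_three_eq_and_lt_iff (hm : 2 ≤ m) (ha2 : a 2 ≤ a m) (hpos : 0 < a m) :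
    ((∀ k ∈ Icc 3 m, a k = a m) ∧ 2 * a m < 3 + a 2) ↔
      ((∀ k ∈ Icc 2 m, a k = a m) ∧ a m ∈ ({1, 2} : Set ℤ)) ∨
        (3 ≤ m ∧ a 2 = 0 ∧ ∀ k ∈ Icc 3 m, a k = 1) := by
  have hall : (∀ k ∈ Icc 2 m, a k = a m) ↔ a 2 = a m ∧ ∀ k ∈ Icc 3 m, a k = a m := by
    rw [← insert_Icc_add_one_left_eq_Icc hm, forall_mem_insert]
    rfl
  simp only [hall, Set.mem_insert_iff, Set.mem_singleton_iff]
  constructor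
  · rintro ⟨htail, hlt⟩
    rcases ha2.eq_or_lt with heq | hlt2
    · exact Or.inl ⟨⟨heq, htail⟩, by omega⟩
    · have hm1 : a m = 1 := by omega
      have hm3 : 3 ≤ m := by
        by_contra h
        obtain rfl : m = 2 := by omega
        exact hlt2.ne rfl
      exact Or.inr ⟨hm3, by omega, fun k hk => hm1 ▸ htail k hk⟩
  · rintro (⟨⟨heq, htail⟩, hval⟩ | ⟨hm3, ha20, hone⟩)
    · exact ⟨htail, by omega⟩
    · have hm1 : a m = 1 := hone m (mem_Icc.2 ⟨hm3, le_rfl⟩)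
      exact ⟨fun k hk => hm1 ▸ hone k hk, by omega⟩

end

theorem stmt_1_general (m : ℕ) (hm : 2 ≤ m) (a : ℕ → ℤ)
    (hmono : ∀ i j, 2 ≤ i → i ≤ j → j ≤ m → a i ≤ a j)
    (hpos : 0 < a m) :
    (3 + ∑ k ∈ Finset.Icc 2 m, a k > (m : ℤ) * a m) ↔
      ((∀ k ∈ Finset.Icc 2 m, a k = a m) ∧ a m ∈ ({1, 2} : Set ℤ)) ∨
      (3 ≤ m ∧ a 2 = 0 ∧ ∀ k ∈ Finset.Icc 3 m, a k = 1) := by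
  rw [gt_iff_lt, mul_lt_three_add_sum_iff hm hmono hpos]
  exact forall_Icc_three_eq_and_lt_iff hm (hmono 2 m le_rfl hm le_rfl) hpos

theorem stmt_1 (m : ℕ) (hm : 2 ≤ m) (a : ℕ → ℤ)
    (hmono : ∀ i j, 2 ≤ i → i ≤ j → j ≤ m → a i ≤ a j)
    (h0 : 0 ≤ a 2) (hpos : 0 < a m) :
    (3 + ∑ k ∈ Finset.Icc 2 m, a k > (m : ℤ) * a m) ↔
      ((∀ k ∈ Finset.Icc 2 m, a k = a m) ∧ a m ∈ ({1, 2} : Set ℤ)) ∨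
      (3 ≤ m ∧ a 2 = 0 ∧ ∀ k ∈ Finset.Icc 3 m, a k = 1) :=
  stmt_1_general m hm a hmono hpos
end

section
/- Let m ≥ 0, and let a, b, l₀, l₁, l₂ and c₁ ≤ … ≤ c_m be integers with 0 ≤ a ≤ b, l₀, l₁, l₂ ≥ 1 and l₀ = a + l₁ = b + l₂. Set d := max(b, c_m) if m ≥ 1 and d := b if m = 0. If 3 + b + c₁ + … + c_m − l₁ > (2+m)·d, then either d = 0 and l₁ ≤ 2, or d = 1 and l₁ = 1. -/
open Finset

theorem sum_Icc_le_nsmul_of_monotoneOn {M : Type*} [AddCommMonoid M] [PartialOrder M]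
    [IsOrderedAddMonoid M] {m : ℕ} {c : ℕ → M} (hc : MonotoneOn c (Icc 1 m)) :
    ∑ k ∈ Icc 1 m, c k ≤ m • c m := by
  calc ∑ k ∈ Icc 1 m, c k ≤ #(Icc 1 m) • c m :=
        sum_le_card_nsmul _ _ _ fun k hk ↦
          hc hk (right_mem_Icc.2 ((mem_Icc.1 hk).1.trans (mem_Icc.1 hk).2)) (mem_Icc.1 hk).2
    _ = m • c m := by simp

theorem stmt_9_general (m : ℕ) (a b l1 : ℤ) (c : ℕ → ℤ)
    (ha : 0 ≤ a) (hab : a ≤ b)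
    (hl1 : 1 ≤ l1)
    (hmono : ∀ i j, 1 ≤ i → i ≤ j → j ≤ m → c i ≤ c j)
    (d : ℤ) (hd : d = if 1 ≤ m then max b (c m) else b)
    (h : 3 + b + (∑ k ∈ Finset.Icc 1 m, c k) - l1 > (2 + m) * d) :
    (d = 0 ∧ l1 ≤ 2) ∨ (d = 1 ∧ l1 = 1) := by
  have hbd : b ≤ d := by
    rw [hd]; split_ifs <;> simp
  have hsum : ∑ k ∈ Icc 1 m, c k ≤ m * d := by
    obtain rfl | hm : m = 0 ∨ 1 ≤ m := by omega
    · simp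
    have hcd : c m ≤ d := by
      rw [hd, if_pos hm]; exact le_max_right _ _
    calc ∑ k ∈ Icc 1 m, c k ≤ m • c m :=
          sum_Icc_le_nsmul_of_monotoneOn fun i hi j hj hij ↦
            hmono i j (mem_Icc.1 hi).1 hij (mem_Icc.1 hj).2
      _ ≤ m * d := by rw [nsmul_eq_mul]; gcongr
  have hkey : d + l1 < 3 := by linarith
  omega

theorem stmt_9 (m : ℕ) (a b l0 l1 l2 : ℤ) (c : ℕ → ℤ)
    (ha : 0 ≤ a) (hab : a ≤ b)
    (hl0 : 1 ≤ l0) (hl1 : 1 ≤ l1) (hl2 : 1 ≤ l2)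
    (h1 : l0 = a + l1) (h2 : l0 = b + l2)
    (hmono : ∀ i j, 1 ≤ i → i ≤ j → j ≤ m → c i ≤ c j)
    (d : ℤ) (hd : d = if 1 ≤ m then max b (c m) else b)
    (h : 3 + b + (∑ k ∈ Finset.Icc 1 m, c k) - l1 > (2 + m) * d) :
    (d = 0 ∧ l1 ≤ 2) ∨ (d = 1 ∧ l1 = 1) :=
  stmt_9_general m a b l1 c ha hab hl1 hmono d hd h
end
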